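/- arXiv:2604.25145 — 2 statements merged into one kernel-verified Lean document; each statement's English description precedes it below -/
import Mathlib

section
/- E-step for V: under the same complete-data model, the conditional distribution of V given x is Binomial(k−1, p) with p = π F_1 / (π F_1 + (1−π) F_2), independent of Z; in particular E[V | x] = (k−1) π F_1 / (π F_1 + (1−π) F_2). -/
/-!
Writing `a = π F₁`, `b = (1 - π) F₂` and `p = a / (a + b)`, the joint weight of `(z, v)` splits as
`(π f₁)^z ((1 - π) f₂)^(1 - z) · (a + b)^(k-1) · B_{k-1,v}(p)`, where `B_{n,v}` is the Bernstein
polynomial `C(n,v) X^v (1 - X)^(n-v)`. A weight of product form has a `V`-marginal proportional to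
its `V`-factor, and the Bernstein basis sums to `1` with mean `∑ v B_{n,v} = n X`.
-/

open Finset Polynomial

section ProductWeights

variable {ι κ : Type*} {s : Finset ι} {t : Finset κ} {w : ι → κ → ℝ} {c : ι → ℝ} {d : κ → ℝ}

theorem sum_sum_mul_eq_of_eq_mul (hw : ∀ z ∈ s, ∀ v ∈ t, w z v = c z * d v) (h : κ → ℝ) :
    ∑ z ∈ s, ∑ v ∈ t, h v * w z v = (∑ z ∈ s, c z) * ∑ v ∈ t, h v * d v := by
  rw [sum_mul]
  refine sum_congr rfl fun z hz => ?_
  rw [mul_sum]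
  exact sum_congr rfl fun v hv => by rw [hw z hz v hv]; ring

theorem marginal_div_eq_of_eq_mul (hw : ∀ z ∈ s, ∀ v ∈ t, w z v = c z * d v)
    (hc : ∑ z ∈ s, c z ≠ 0) {v : κ} (hv : v ∈ t) :
    (∑ z ∈ s, w z v) / ∑ z ∈ s, ∑ v' ∈ t, w z v' = d v / ∑ v' ∈ t, d v' := by
  have htotal := sum_sum_mul_eq_of_eq_mul hw 1
  simp only [Pi.one_apply, one_mul] at htotal
  rw [htotal, sum_congr rfl fun z hz => hw z hz v hv, ← sum_mul, mul_div_mul_left _ _ hc]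

theorem weighted_mean_eq_of_eq_mul (hw : ∀ z ∈ s, ∀ v ∈ t, w z v = c z * d v)
    (hc : ∑ z ∈ s, c z ≠ 0) (h : κ → ℝ) :
    (∑ z ∈ s, ∑ v ∈ t, h v * w z v) / ∑ z ∈ s, ∑ v ∈ t, w z v
      = (∑ v ∈ t, h v * d v) / ∑ v ∈ t, d v := by
  have htotal := sum_sum_mul_eq_of_eq_mul hw 1
  simp only [Pi.one_apply, one_mul] at htotal
  rw [htotal, sum_sum_mul_eq_of_eq_mul hw h, mul_div_mul_left _ _ hc]

end ProductWeights

namespace bernsteinPolynomial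

theorem sum_eval (n : ℕ) (x : ℝ) :
    ∑ ν ∈ range (n + 1), (bernsteinPolynomial ℝ n ν).eval x = 1 := by
  rw [← eval_finsetSum, bernsteinPolynomial.sum, eval_one]

theorem sum_mul_eval (n : ℕ) (x : ℝ) :
    ∑ ν ∈ range (n + 1), (ν : ℝ) * (bernsteinPolynomial ℝ n ν).eval x = n * x := by
  simpa only [nsmul_eq_mul, eval_finsetSum, eval_mul, eval_X, eval_natCast]
    using congrArg (eval x) (bernsteinPolynomial.sum_smul (R := ℝ) n)

theorem eval_div_add_mul_pow {a b : ℝ} (hab : a + b ≠ 0) {n ν : ℕ} (hν : ν ≤ n) :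
    (bernsteinPolynomial ℝ n ν).eval (a / (a + b)) * (a + b) ^ n
      = n.choose ν * a ^ ν * b ^ (n - ν) := by
  have hb : 1 - a / (a + b) = b / (a + b) := by field_simp; ring
  rw [bernsteinPolynomial, ← Nat.add_sub_of_le hν, pow_add]
  simp only [eval_mul, eval_pow, eval_sub, eval_one, eval_X, eval_natCast, hb, div_pow,
    Nat.add_sub_cancel_left]
  field_simp

end bernsteinPolynomial

theorem completeData_weight_eq_mul (π f₁ f₂ F₁ F₂ : ℝ) {n z v : ℕ} (hz : z ≤ 1) (hv : v ≤ n) :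
    (n.choose v : ℝ) * π ^ (z + v) * (1 - π) ^ (n + 1 - z - v)
        * f₁ ^ z * f₂ ^ (1 - z) * F₁ ^ v * F₂ ^ (n - v)
      = (π * f₁) ^ z * ((1 - π) * f₂) ^ (1 - z)
        * (n.choose v * (π * F₁) ^ v * ((1 - π) * F₂) ^ (n - v)) := by
  have hexp : n + 1 - z - v = (1 - z) + (n - v) := by omega
  simp only [hexp, mul_pow, pow_add]
  ring

theorem estep_V_general
    (π : ℝ) (k : ℕ) (hk : 1 ≤ k)
    (f₁ f₂ F₁ F₂ : ℝ)
    (hf : 0 < π * f₁ + (1 - π) * f₂) (hF : 0 < π * F₁ + (1 - π) * F₂)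
    (w : ℕ → ℕ → ℝ)
    (hw : ∀ z v, w z v =
      ((k - 1).choose v : ℝ) * π ^ (z + v) * (1 - π) ^ (k - z - v)
        * f₁ ^ z * f₂ ^ (1 - z) * F₁ ^ v * F₂ ^ (k - 1 - v))
    (p : ℝ) (hp : p = π * F₁ / (π * F₁ + (1 - π) * F₂)) :
    (∀ v ∈ Finset.range k,
        (∑ z ∈ Finset.range 2, w z v)
            / (∑ z ∈ Finset.range 2, ∑ v' ∈ Finset.range k, w z v')
          = ((k - 1).choose v : ℝ) * p ^ v * (1 - p) ^ (k - 1 - v))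
    ∧ (∑ z ∈ Finset.range 2, ∑ v ∈ Finset.range k, (v : ℝ) * w z v)
          / (∑ z ∈ Finset.range 2, ∑ v ∈ Finset.range k, w z v)
        = ((k : ℝ) - 1) * p := by
  obtain ⟨n, rfl⟩ : ∃ n, k = n + 1 := ⟨k - 1, by omega⟩
  set S := π * F₁ + (1 - π) * F₂
  set c : ℕ → ℝ := fun z => (π * f₁) ^ z * ((1 - π) * f₂) ^ (1 - z) * S ^ n
  have hprod : ∀ z ∈ range 2, ∀ v ∈ range (n + 1),
      w z v = c z * (bernsteinPolynomial ℝ n v).eval p := by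
    intro z hz v hv
    have hz1 : z ≤ 1 := Nat.lt_succ_iff.mp (mem_range.mp hz)
    have hvn : v ≤ n := Nat.lt_succ_iff.mp (mem_range.mp hv)
    rw [hw, Nat.add_sub_cancel, completeData_weight_eq_mul π f₁ f₂ F₁ F₂ hz1 hvn,
      ← bernsteinPolynomial.eval_div_add_mul_pow hF.ne' hvn, ← hp]
    ring
  have hc : ∑ z ∈ range 2, c z ≠ 0 := by
    have hsum : ∑ z ∈ range 2, c z = (π * f₁ + (1 - π) * f₂) * S ^ n := by
      simp only [c, sum_range_succ, sum_range_zero]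
      ring
    rw [hsum]
    exact mul_ne_zero hf.ne' (pow_ne_zero _ hF.ne')
  constructor
  · intro v hv
    rw [marginal_div_eq_of_eq_mul hprod hc hv, bernsteinPolynomial.sum_eval, div_one,
      bernsteinPolynomial]
    simp
  · rw [weighted_mean_eq_of_eq_mul hprod hc, bernsteinPolynomial.sum_mul_eval,
      bernsteinPolynomial.sum_eval, div_one]
    push_cast
    ring

/-- E-step for `V`: the posterior distribution of `V` is `Binomial(k−1, p)` with
`p = π F₁ / (π F₁ + (1−π) F₂)`, and in particular `E[V | x] = (k−1) p`. -/
theorem estep_V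
    (π : ℝ) (hπ : π ∈ Set.Ioo (0 : ℝ) 1) (k : ℕ) (hk : 1 ≤ k)
    (f₁ f₂ F₁ F₂ : ℝ) (hf₁ : 0 ≤ f₁) (hf₂ : 0 ≤ f₂) (hF₁ : 0 ≤ F₁) (hF₂ : 0 ≤ F₂)
    (hf : 0 < π * f₁ + (1 - π) * f₂) (hF : 0 < π * F₁ + (1 - π) * F₂)
    (w : ℕ → ℕ → ℝ)
    (hw : ∀ z v, w z v =
      ((k - 1).choose v : ℝ) * π ^ (z + v) * (1 - π) ^ (k - z - v)
        * f₁ ^ z * f₂ ^ (1 - z) * F₁ ^ v * F₂ ^ (k - 1 - v))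
    (p : ℝ) (hp : p = π * F₁ / (π * F₁ + (1 - π) * F₂)) :
    (∀ v ∈ Finset.range k,
        (∑ z ∈ Finset.range 2, w z v)
            / (∑ z ∈ Finset.range 2, ∑ v' ∈ Finset.range k, w z v')
          = ((k - 1).choose v : ℝ) * p ^ v * (1 - p) ^ (k - 1 - v))
    ∧ (∑ z ∈ Finset.range 2, ∑ v ∈ Finset.range k, (v : ℝ) * w z v)
          / (∑ z ∈ Finset.range 2, ∑ v ∈ Finset.range k, w z v)
        = ((k : ℝ) - 1) * p :=
  estep_V_general π k hk f₁ f₂ F₁ F₂ hf hF w hw p hp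
end

section
/- Enrichment under NS with stochastic dominance: suppose the rare component cdf F_2 satisfies F_2(x) ≤ F_1(x) for all x (F_2 first-order stochastically dominates F_1), with strict inequality on a set of positive f-measure. Then for k ≥ 2 the probability that the observed maximum of a set of k i.i.d. mixture draws belongs to component 2 is strictly greater than 1−π, the prior probability. -/
/-!
Let `ν` be the law of component 2 and `G = F₂` its cdf, which is continuous. Continuity gives
`ν {G < s} ≤ s`, so by the layer-cake formula
`∫ G ^ (n + 1) dν ≥ ∫₀¹ (1 - t) (n + 1) tⁿ dt = 1 / (n + 2)`.
The mixture cdf `F = π F₁ + (1 - π) F₂` dominates `G`, strictly on a set of positive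
`ν`-measure: to the right of a point where `F₂ < F₁`, the cdf `F₂` has to increase (it tends
to `1`) while staying below `F₁`. Hence
`∫ f₂ F ^ (n + 1) = ∫ F ^ (n + 1) dν > 1 / (n + 2)`, which is the claim for `k = n + 2`.
-/

open MeasureTheory ProbabilityTheory Set
open scoped ENNReal

section ContinuousCDF

variable (μ : Measure ℝ) [IsProbabilityMeasure μ]

lemma integrable_pow_of_monotone {H : ℝ → ℝ} (hH : Monotone H) (hH0 : ∀ x, 0 ≤ H x)
    (hH1 : ∀ x, H x ≤ 1) (m : ℕ) : Integrable (fun x => H x ^ m) μ :=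
  .of_bound (hH.measurable.pow_const m).aestronglyMeasurable 1 <| ae_of_all _ fun x => by
    rw [Real.norm_eq_abs, abs_of_nonneg (pow_nonneg (hH0 x) m)]
    exact pow_le_one₀ (hH0 x) (hH1 x)

variable {μ}

lemma measure_cdf_lt_le (hμ : Continuous (cdf μ)) (s : ℝ) :
    μ {x | cdf μ x < s} ≤ ENNReal.ofReal s := by
  rcases le_or_gt 1 s with hs | hs
  · exact prob_le_one.trans (ENNReal.one_le_ofReal.2 hs)
  set S := {x | cdf μ x < s}
  rcases S.eq_empty_or_nonempty with hS | hS
  · simp [hS]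
  obtain ⟨b, hb⟩ := ((tendsto_cdf_atTop μ).eventually_const_lt hs).exists
  have hbdd : BddAbove S := ⟨b, fun x hx => ((monotone_cdf μ).reflect_lt (hx.trans hb)).le⟩
  have hsup : cdf μ (sSup S) ≤ s :=
    closure_minimal (fun _ hx => le_of_lt hx) (isClosed_le hμ continuous_const)
      (csSup_mem_closure hS hbdd)
  calc μ S ≤ μ (Iic (sSup S)) := measure_mono fun x hx => le_csSup hbdd hx
    _ = ENNReal.ofReal (cdf μ (sSup S)) := (ofReal_cdf μ _).symm
    _ ≤ ENNReal.ofReal s := ENNReal.ofReal_le_ofReal hsup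

lemma ofReal_one_sub_le_measure_le_cdf (hμ : Continuous (cdf μ)) {t : ℝ} (ht : 0 ≤ t) :
    ENNReal.ofReal (1 - t) ≤ μ {x | t ≤ cdf μ x} := by
  have hS : MeasurableSet {x | cdf μ x < t} :=
    measurableSet_lt (monotone_cdf μ).measurable measurable_const
  have hcompl : {x | t ≤ cdf μ x} = {x | cdf μ x < t}ᶜ := by ext; simp
  rw [hcompl, prob_compl_eq_one_sub hS, ENNReal.ofReal_sub _ ht, ENNReal.ofReal_one]
  exact tsub_le_tsub_left (measure_cdf_lt_le hμ t) 1

lemma integral_one_sub_mul_pow (n : ℕ) :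
    ∫ t in (0 : ℝ)..1, (1 - t) * ((n + 1) * t ^ n) = 1 / (n + 2) := by
  have hsplit : (fun t : ℝ => (1 - t) * ((n + 1) * t ^ n)) =
      fun t => (n + 1 : ℝ) * t ^ n - (n + 1) * t ^ (n + 1) := by
    funext t; ring
  rw [hsplit, intervalIntegral.integral_sub
    (by apply Continuous.intervalIntegrable; fun_prop)
    (by apply Continuous.intervalIntegrable; fun_prop),
    intervalIntegral.integral_const_mul, intervalIntegral.integral_const_mul, integral_pow,
    integral_pow]
  field_simp
  push_cast
  ring

lemma one_div_le_integral_cdf_pow (hμ : Continuous (cdf μ)) (n : ℕ) :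
    1 / (n + 2 : ℝ) ≤ ∫ x, cdf μ x ^ (n + 1) ∂μ := by
  have hlayer : ∫⁻ x, ENNReal.ofReal (cdf μ x ^ (n + 1)) ∂μ =
      ∫⁻ t in Ioi 0, μ {x | t ≤ cdf μ x} * ENNReal.ofReal ((n + 1) * t ^ n) := by
    rw [← lintegral_comp_eq_lintegral_meas_le_mul μ (ae_of_all _ (cdf_nonneg μ))
      (monotone_cdf μ).measurable.aemeasurable
      (fun _ _ => (by fun_prop : Continuous fun t : ℝ => (n + 1 : ℝ) * t ^ n).intervalIntegrable
        _ _)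
      ((ae_restrict_iff' measurableSet_Ioi).2 (ae_of_all _ fun t (ht : 0 < t) => by positivity))]
    congr with x
    rw [intervalIntegral.integral_const_mul, integral_pow]
    field_simp
    simp
  have hlower : ENNReal.ofReal (1 / (n + 2)) ≤
      ∫⁻ t in Ioi 0, μ {x | t ≤ cdf μ x} * ENNReal.ofReal ((n + 1) * t ^ n) :=
    calc ENNReal.ofReal (1 / (n + 2))
        = ∫⁻ t in Ioc 0 1, ENNReal.ofReal ((1 - t) * ((n + 1) * t ^ n)) := by
          rw [← integral_one_sub_mul_pow, intervalIntegral.integral_of_le zero_le_one,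
            ofReal_integral_eq_lintegral_ofReal (by fun_prop : Continuous _).integrableOn_Ioc
              ((ae_restrict_iff' measurableSet_Ioc).2 (ae_of_all _ fun t ht =>
                mul_nonneg (sub_nonneg.2 ht.2) (mul_nonneg n.cast_add_one_pos.le
                  (pow_nonneg ht.1.le n))))]
      _ ≤ ∫⁻ t in Ioc 0 1, μ {x | t ≤ cdf μ x} * ENNReal.ofReal ((n + 1) * t ^ n) :=
          setLIntegral_mono' measurableSet_Ioc fun t ht => by
            rw [ENNReal.ofReal_mul (sub_nonneg.2 ht.2)]
            gcongr
            exact ofReal_one_sub_le_measure_le_cdf hμ ht.1.le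
      _ ≤ _ := lintegral_mono_set Ioc_subset_Ioi_self
  have hint :=
    integrable_pow_of_monotone μ (monotone_cdf μ) (cdf_nonneg μ) (cdf_le_one μ) (n + 1)
  rw [← ENNReal.ofReal_le_ofReal_iff (integral_nonneg fun x => pow_nonneg (cdf_nonneg μ x) _),
    ofReal_integral_eq_lintegral_ofReal hint (ae_of_all _ fun x => pow_nonneg (cdf_nonneg μ x) _),
    hlayer]
  exact hlower

lemma measure_cdf_lt_pos (hμ : Continuous (cdf μ)) {H : ℝ → ℝ} (hH : Monotone H)
    (hH1 : ∀ x, H x ≤ 1) {x₀ : ℝ} (hx₀ : cdf μ x₀ < H x₀) :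
    0 < μ {x | cdf μ x < H x} := by
  obtain ⟨c, hc₀, hcH⟩ := exists_between hx₀
  obtain ⟨b, hb⟩ :=
    ((tendsto_cdf_atTop μ).eventually_const_lt (hcH.trans_le (hH1 x₀))).exists
  obtain ⟨y, hy⟩ := intermediate_value_univ x₀ b hμ ⟨hc₀.le, hb.le⟩
  have hIoc : Ioc x₀ y ⊆ {x | cdf μ x < H x} := fun x hx =>
    calc cdf μ x ≤ cdf μ y := monotone_cdf μ hx.2
      _ < H x₀ := hy ▸ hcH
      _ ≤ H x := hH hx.1.le
  have hmeas : μ (Ioc x₀ y) = ENNReal.ofReal (cdf μ y - cdf μ x₀) := by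
    rw [← (cdf μ).measure_Ioc, measure_cdf]
  refine lt_of_lt_of_le ?_ (measure_mono hIoc)
  rw [hmeas, ENNReal.ofReal_pos, hy]
  linarith

lemma one_div_lt_integral_pow_of_cdf_le (hμ : Continuous (cdf μ)) {H : ℝ → ℝ}
    (hH : Monotone H) (hH1 : ∀ x, H x ≤ 1) (hle : ∀ x, cdf μ x ≤ H x) {x₀ : ℝ}
    (hx₀ : cdf μ x₀ < H x₀) (n : ℕ) : 1 / (n + 2 : ℝ) < ∫ x, H x ^ (n + 1) ∂μ := by
  have hH0 x : 0 ≤ H x := (cdf_nonneg μ x).trans (hle x)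
  have hiH := integrable_pow_of_monotone μ hH hH0 hH1 (n + 1)
  have hiF :=
    integrable_pow_of_monotone μ (monotone_cdf μ) (cdf_nonneg μ) (cdf_le_one μ) (n + 1)
  have hgap : 0 < ∫ x, H x ^ (n + 1) - cdf μ x ^ (n + 1) ∂μ := by
    rw [integral_pos_iff_support_of_nonneg
      (fun x => sub_nonneg.2 (pow_le_pow_left₀ (cdf_nonneg μ x) (hle x) _)) (hiH.sub hiF)]
    refine (measure_cdf_lt_pos hμ hH hH1 hx₀).trans_le (measure_mono fun x hx => ?_)
    exact (sub_pos.2 (pow_lt_pow_left₀ hx (cdf_nonneg μ x) n.succ_ne_zero)).ne'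
  rw [integral_sub hiH hiF] at hgap
  linarith [one_div_le_integral_cdf_pow hμ n]

end ContinuousCDF

lemma integral_withDensity_ofReal {α : Type*} [MeasurableSpace α] {μ : Measure α}
    {f : α → ℝ}
    (hf0 : ∀ x, 0 ≤ f x) (hf : AEMeasurable f μ) (g : α → ℝ) :
    ∫ x, g x ∂μ.withDensity (fun x => ENNReal.ofReal (f x)) = ∫ x, f x * g x ∂μ := by
  rw [integral_withDensity_eq_integral_toReal_smul₀ hf.ennreal_ofReal
    (ae_of_all _ fun _ => ENNReal.ofReal_lt_top)]
  simp only [ENNReal.toReal_ofReal (hf0 _), smul_eq_mul]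

section Density

variable {f : ℝ → ℝ}

lemma isProbabilityMeasure_withDensity_ofReal (hf0 : ∀ x, 0 ≤ f x) (hf : Integrable f)
    (hf1 : ∫ x, f x = 1) :
    IsProbabilityMeasure (volume.withDensity fun x => ENNReal.ofReal (f x)) :=
  ⟨by rw [withDensity_apply _ MeasurableSet.univ, Measure.restrict_univ,
    ← ofReal_integral_eq_lintegral_ofReal hf (ae_of_all _ hf0), hf1, ENNReal.ofReal_one]⟩

variable [IsProbabilityMeasure (volume.withDensity fun x => ENNReal.ofReal (f x))]

lemma cdf_withDensity_ofReal (hf0 : ∀ x, 0 ≤ f x) (hf : Integrable f) (x : ℝ) :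
    cdf (volume.withDensity fun x => ENNReal.ofReal (f x)) x = ∫ t in Iic x, f t := by
  rw [cdf_eq_real, measureReal_def, withDensity_apply _ measurableSet_Iic,
    ← ofReal_integral_eq_lintegral_ofReal hf.integrableOn (ae_of_all _ hf0),
    ENNReal.toReal_ofReal (setIntegral_nonneg measurableSet_Iic fun t _ => hf0 t)]

lemma continuous_cdf_withDensity_ofReal (hf0 : ∀ x, 0 ≤ f x) (hf : Integrable f) :
    Continuous (cdf (volume.withDensity fun x => ENNReal.ofReal (f x))) := by
  have hprim x : cdf (volume.withDensity fun x => ENNReal.ofReal (f x)) x =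
      (∫ t in Iic 0, f t) + ∫ t in 0..x, f t := by
    rw [cdf_withDensity_ofReal hf0 hf,
      ← intervalIntegral.integral_Iic_sub_Iic hf.integrableOn hf.integrableOn]
    ring
  exact (continuous_const.add (intervalIntegral.continuous_primitive
    (fun _ _ => hf.intervalIntegrable) 0)).congr fun x => (hprim x).symm

end Density

theorem ns_enrichment_of_dominated_component_general
    (π : ℝ) (hπ : π ∈ Set.Ioo (0 : ℝ) 1)
    (f₁ f₂ : ℝ → ℝ)
    (hf₁ : ∀ x, 0 ≤ f₁ x) (hf₂ : ∀ x, 0 ≤ f₂ x)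
    (hi₁ : Integrable f₁ volume) (hi₂ : Integrable f₂ volume)
    (hint₁ : ∫ x, f₁ x = 1) (hint₂ : ∫ x, f₂ x = 1)
    (F₁ F₂ : ℝ → ℝ)
    (hF₁ : ∀ x, F₁ x = ∫ t in Set.Iic x, f₁ t)
    (hF₂ : ∀ x, F₂ x = ∫ t in Set.Iic x, f₂ t)
    (hdom : ∀ x, F₂ x ≤ F₁ x)
    (hstrict : 0 < (volume.withDensity
        (fun x => ENNReal.ofReal (π * f₁ x + (1 - π) * f₂ x)))
        {x | F₂ x < F₁ x})
    (k : ℕ) (hk : 2 ≤ k) :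
    1 - π < (k : ℝ) * (1 - π)
        * ∫ x, f₂ x * (π * F₁ x + (1 - π) * F₂ x) ^ (k - 1) := by
  obtain ⟨hπ0, hπ1⟩ := hπ
  obtain ⟨n, rfl⟩ : ∃ n, k = n + 2 := ⟨k - 2, by omega⟩
  obtain ⟨x₀, hx₀ : F₂ x₀ < F₁ x₀⟩ := nonempty_of_measure_ne_zero hstrict.ne'
  set μ₁ := volume.withDensity fun x => ENNReal.ofReal (f₁ x)
  set μ₂ := volume.withDensity fun x => ENNReal.ofReal (f₂ x)
  have := isProbabilityMeasure_withDensity_ofReal hf₁ hi₁ hint₁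
  have := isProbabilityMeasure_withDensity_ofReal hf₂ hi₂ hint₂
  obtain rfl : F₁ = cdf μ₁ :=
    funext fun x => (hF₁ x).trans (cdf_withDensity_ofReal hf₁ hi₁ x).symm
  obtain rfl : F₂ = cdf μ₂ :=
    funext fun x => (hF₂ x).trans (cdf_withDensity_ofReal hf₂ hi₂ x).symm
  have hmoment := one_div_lt_integral_pow_of_cdf_le
    (H := fun x => π * cdf μ₁ x + (1 - π) * cdf μ₂ x)
    (continuous_cdf_withDensity_ofReal hf₂ hi₂)
    (((monotone_cdf μ₁).const_mul hπ0.le).add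
      ((monotone_cdf μ₂).const_mul (sub_nonneg.2 hπ1.le)))
    (fun x => by nlinarith [cdf_le_one μ₁ x, cdf_le_one μ₂ x])
    (fun x => by nlinarith [hdom x]) (by nlinarith) n
  rw [integral_withDensity_ofReal hf₂ hi₂.aemeasurable] at hmoment
  rw [show n + 2 - 1 = n + 1 by omega]
  calc 1 - π = (n + 2 : ℕ) * (1 - π) * (1 / (n + 2)) := by push_cast; field_simp
    _ < _ := mul_lt_mul_of_pos_left hmoment (mul_pos (by positivity) (sub_pos.2 hπ1))

/-- Enrichment under NS with first-order stochastic dominance: if `F₂ ≤ F₁` pointwise,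
with strict inequality on a set of positive mixture-density measure, then for `k ≥ 2`
the probability that the observed maximum of a set of `k` i.i.d. mixture draws comes
from component 2, namely `k (1−π) ∫ f₂ F^{k−1}` with `F = π F₁ + (1−π) F₂`, strictly
exceeds the prior probability `1−π`. -/
theorem ns_enrichment_of_dominated_component
    (π : ℝ) (hπ : π ∈ Set.Ioo (0 : ℝ) 1)
    (f₁ f₂ : ℝ → ℝ)
    (hf₁ : ∀ x, 0 ≤ f₁ x) (hf₂ : ∀ x, 0 ≤ f₂ x)
    (hm₁ : Measurable f₁) (hm₂ : Measurable f₂)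
    (hi₁ : Integrable f₁ volume) (hi₂ : Integrable f₂ volume)
    (hint₁ : ∫ x, f₁ x = 1) (hint₂ : ∫ x, f₂ x = 1)
    (F₁ F₂ : ℝ → ℝ)
    (hF₁ : ∀ x, F₁ x = ∫ t in Set.Iic x, f₁ t)
    (hF₂ : ∀ x, F₂ x = ∫ t in Set.Iic x, f₂ t)
    (hdom : ∀ x, F₂ x ≤ F₁ x)
    (hstrict : 0 < (volume.withDensity
        (fun x => ENNReal.ofReal (π * f₁ x + (1 - π) * f₂ x)))
        {x | F₂ x < F₁ x})
    (k : ℕ) (hk : 2 ≤ k) :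
    1 - π < (k : ℝ) * (1 - π)
        * ∫ x, f₂ x * (π * F₁ x + (1 - π) * F₂ x) ^ (k - 1) :=
  ns_enrichment_of_dominated_component_general π hπ f₁ f₂ hf₁ hf₂ hi₁ hi₂ hint₁ hint₂ F₁ F₂ hF₁ hF₂
    hdom hstrict k hk
end
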